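/- Along any solution of the continuous inertial mirror descent system with parameter μ satisfying μ(0) = 0 and μ'(t) ≤ 1 for all t > 0, one has for every t > 0 with μ(t) > 0 the bound f(x(t)) − f* ≤ V(x*)/μ(t), where V(x*) = sup_ζ (⟨ζ, x*⟩ − W(ζ)). -/

import Mathlib

/-!
The energy `E(t) = μ(t) (f(x(t)) - f*) - (⟪ζ(t), x*⟫ - W(ζ(t)))` vanishes at `t = 0` and is
nonincreasing: substituting `ζ' = -∇f(x)` and `μ x' = ∇W(ζ) - x`, the terms in `∇W(ζ)` cancel and
`E' = μ' (f(x) - f*) + ⟪∇f(x), x* - x⟫ ≤ (μ' - 1) (f(x) - f*) ≤ 0` by the gradient inequality.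
Hence `μ(t) (f(x(t)) - f*) ≤ ⟪ζ(t), x*⟫ - W(ζ(t)) ≤ V(x*)`.
-/

open RealInnerProductSpace Set

theorem ConvexOn.hasFDerivAt_sub_le {E : Type*} [NormedAddCommGroup E] [NormedSpace ℝ E]
    {f : E → ℝ} {f' : E →L[ℝ] ℝ} {s : Set E} {a b : E}
    (hf : ConvexOn ℝ s f) (ha : a ∈ s) (hb : b ∈ s) (hf' : HasFDerivAt f f' a) :
    f' (b - a) ≤ f b - f a := by
  have hℓ : HasDerivAt (f ∘ AffineMap.lineMap (k := ℝ) a b) (f' (b - a)) 0 := by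
    rw [← AffineMap.lineMap_apply_zero (k := ℝ) a b] at hf'
    exact hf'.comp_hasDerivAt 0 AffineMap.hasDerivAt_lineMap
  have hslope := (hf.comp_affineMap (AffineMap.lineMap (k := ℝ) a b)).le_slope_of_hasDerivAt
    (by simpa using ha) (by simpa using hb) one_pos hℓ
  simpa [slope_def_field] using hslope

section Gradient

variable {H : Type*} [NormedAddCommGroup H] [InnerProductSpace ℝ H] [CompleteSpace H]

theorem HasGradientAt.comp_hasDerivAt {f : H → ℝ} {g : H} {x : ℝ → H} {x' : H} {t : ℝ}
    (hf : HasGradientAt f g (x t)) (hx : HasDerivAt x x' t) :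
    HasDerivAt (fun s => f (x s)) ⟪g, x'⟫ t := by
  have := (hasGradientAt_iff_hasFDerivAt.mp hf).comp_hasDerivAt t hx
  rwa [InnerProductSpace.toDual_apply_apply] at this

theorem ConvexOn.inner_gradient_sub_le {f : H → ℝ} {s : Set H} {a b : H}
    (hf : ConvexOn ℝ s f) (ha : a ∈ s) (hb : b ∈ s) (hfa : DifferentiableAt ℝ f a) :
    ⟪gradient f a, b - a⟫ ≤ f b - f a := by
  simpa using hf.hasFDerivAt_sub_le ha hb (hasGradientAt_iff_hasFDerivAt.mp hfa.hasGradientAt)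

end Gradient

section InertialMirrorDescent

variable {H : Type*} [NormedAddCommGroup H] [InnerProductSpace ℝ H]
  {f W : H → ℝ} {μ : ℝ → ℝ} {ζ x : ℝ → H} {xstar : H}

def imdLyapunov (f W : H → ℝ) (μ : ℝ → ℝ) (ζ x : ℝ → H) (xstar : H) (s : ℝ) : ℝ :=
  μ s * (f (x s) - f xstar) - (⟪ζ s, xstar⟫ - W (ζ s))

theorem imdLyapunov_zero (hμ0 : μ 0 = 0) (hζ0 : ζ 0 = 0) (hW0 : W 0 = 0) :
    imdLyapunov f W μ ζ x xstar 0 = 0 := by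
  simp [imdLyapunov, hμ0, hζ0, hW0]

theorem hasDerivAt_imdLyapunov [CompleteSpace H] {s μ' : ℝ} {x' : H}
    (hf : DifferentiableAt ℝ f (x s)) (hW : DifferentiableAt ℝ W (ζ s))
    (hμ : HasDerivAt μ μ' s) (hx : HasDerivAt x x' s)
    (hζ : HasDerivAt ζ (-gradient f (x s)) s)
    (hmirror : μ s • x' + x s = gradient W (ζ s)) :
    HasDerivAt (imdLyapunov f W μ ζ x xstar)
      (μ' * (f (x s) - f xstar) + ⟪gradient f (x s), xstar - x s⟫) s := by
  have hfx := (hf.hasGradientAt.comp_hasDerivAt hx).sub_const (f xstar)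
  have hζx : HasDerivAt (fun u => ⟪ζ u, xstar⟫) ⟪-gradient f (x s), xstar⟫ s := by
    simpa using hζ.inner ℝ (hasDerivAt_const s xstar)
  have hWζ := hW.hasGradientAt.comp_hasDerivAt hζ
  refine ((hμ.mul hfx).sub (hζx.sub hWζ)).congr_deriv ?_
  have hx' : μ s * ⟪gradient f (x s), x'⟫ = ⟪gradient f (x s), gradient W (ζ s) - x s⟫ := by
    rw [← real_inner_smul_right, ← hmirror, add_sub_cancel_right]
  rw [hx']
  simp only [inner_sub_right, inner_neg_left, inner_neg_right, real_inner_comm (gradient W (ζ s))]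
  ring

theorem imdLyapunov_deriv_nonpos [CompleteSpace H] {μ' : ℝ} {s : Set H} {y : H}
    (hf : ConvexOn ℝ s f) (hy : y ∈ s) (hxstar : xstar ∈ s) (hfy : DifferentiableAt ℝ f y)
    (hmin : f xstar ≤ f y) (hμ' : μ' ≤ 1) :
    μ' * (f y - f xstar) + ⟪gradient f y, xstar - y⟫ ≤ 0 := by
  have hgrad := hf.inner_gradient_sub_le hy hxstar hfy
  have hμ'f := mul_le_of_le_one_left (sub_nonneg.mpr hmin) hμ'
  linarith

end InertialMirrorDescent

theorem imd_error_bound_general_mu_general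
    {H : Type*} [NormedAddCommGroup H] [InnerProductSpace ℝ H]
    [FiniteDimensional ℝ H]
    (f W : H → ℝ) (μ : ℝ → ℝ) (ζ x : ℝ → H) (xstar : H)
    (hf_conv : ConvexOn ℝ Set.univ f)
    (hf_diff : Differentiable ℝ f)
    (hmin : ∀ y, f xstar ≤ f y)
    (hW_diff : Differentiable ℝ W)
    (hW0 : W 0 = 0)
    (hV_fin : BddAbove (Set.range fun z => ⟪z, xstar⟫ - W z))
    (hμ_diff : Differentiable ℝ μ)
    (hμ0 : μ 0 = 0)
    (hμ'_le_one : ∀ t > (0 : ℝ), deriv μ t ≤ 1)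
    (hζ_diff : Differentiable ℝ ζ) (hx_diff : Differentiable ℝ x)
    (hζ0 : ζ 0 = 0)
    (hζ' : ∀ t ≥ (0 : ℝ), deriv ζ t = -gradient f (x t))
    (hmirror : ∀ t ≥ (0 : ℝ), μ t • deriv x t + x t = gradient W (ζ t)) :
    ∀ t > (0 : ℝ), 0 < μ t →
      f (x t) - f xstar ≤ (⨆ z : H, (⟪z, xstar⟫ - W z)) / μ t := by
  intro t ht hμt
  set E := imdLyapunov f W μ ζ x xstar
  have hE : ∀ s ∈ Ici (0 : ℝ), HasDerivAt E
      (deriv μ s * (f (x s) - f xstar) + ⟪gradient f (x s), xstar - x s⟫) s := fun s hs =>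
    hasDerivAt_imdLyapunov (hf_diff _) (hW_diff _) (hμ_diff s).hasDerivAt
      (hx_diff s).hasDerivAt (hζ' s hs ▸ (hζ_diff s).hasDerivAt) (hmirror s hs)
  have hanti : AntitoneOn E (Ici 0) :=
    antitoneOn_of_hasDerivWithinAt_nonpos (convex_Ici 0)
      (fun s hs => (hE s hs).continuousAt.continuousWithinAt)
      (fun s hs => (hE s (interior_subset hs)).hasDerivWithinAt)
      (fun s hs => imdLyapunov_deriv_nonpos hf_conv (mem_univ _) (mem_univ _) (hf_diff _)
        (hmin _) (hμ'_le_one s (by simpa using hs)))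
  have hEt : E t ≤ 0 := (hanti self_mem_Ici ht.le ht.le).trans_eq (imdLyapunov_zero hμ0 hζ0 hW0)
  rw [le_div_iff₀ hμt, mul_comm]
  calc μ t * (f (x t) - f xstar) ≤ ⟪ζ t, xstar⟫ - W (ζ t) := sub_nonpos.mp hEt
    _ ≤ ⨆ z : H, (⟪z, xstar⟫ - W z) := le_ciSup hV_fin (ζ t)

/-- Along any solution of the continuous inertial mirror descent system with
parameter `μ` satisfying `μ(0) = 0` and `μ'(t) ≤ 1` for all `t > 0`, one has for
every `t > 0` with `μ(t) > 0` the bound `f(x(t)) − f* ≤ V(x*)/μ(t)`, where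
`V(x*) = sup_ζ (⟨ζ, x*⟩ − W(ζ))`. -/
theorem imd_error_bound_general_mu
    {H : Type*} [NormedAddCommGroup H] [InnerProductSpace ℝ H]
    [FiniteDimensional ℝ H]
    (f W : H → ℝ) (μ : ℝ → ℝ) (ζ x : ℝ → H) (xstar : H)
    (hf_conv : ConvexOn ℝ Set.univ f)
    (hf_diff : Differentiable ℝ f)
    (hmin : ∀ y, f xstar ≤ f y)
    (hW_conv : ConvexOn ℝ Set.univ W)
    (hW_diff : Differentiable ℝ W)
    (hW_grad_cont : Continuous (gradient W))
    (hW0 : W 0 = 0) (hWgrad0 : gradient W 0 = 0)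
    (hV_fin : BddAbove (Set.range fun z => ⟪z, xstar⟫ - W z))
    (hμ_diff : Differentiable ℝ μ)
    (hμ'_cont : Continuous (deriv μ))
    (hμ_nonneg : ∀ t ≥ (0 : ℝ), 0 ≤ μ t)
    (hμ0 : μ 0 = 0)
    (hμ'_le_one : ∀ t > (0 : ℝ), deriv μ t ≤ 1)
    (hζ_diff : Differentiable ℝ ζ) (hx_diff : Differentiable ℝ x)
    (hζ0 : ζ 0 = 0) (hx0 : x 0 = gradient W 0)
    (hζ' : ∀ t ≥ (0 : ℝ), deriv ζ t = -gradient f (x t))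
    (hmirror : ∀ t ≥ (0 : ℝ), μ t • deriv x t + x t = gradient W (ζ t))
    (hfx_cont : Continuous (fun s => f (x s)))
    (hfx_diff : Differentiable ℝ (fun s => f (x s))) :
    ∀ t > (0 : ℝ), 0 < μ t →
      f (x t) - f xstar ≤ (⨆ z : H, (⟪z, xstar⟫ - W z)) / μ t :=
  imd_error_bound_general_mu_general f W μ ζ x xstar hf_conv hf_diff hmin hW_diff hW0 hV_fin hμ_diff
    hμ0 hμ'_le_one hζ_diff hx_diff hζ0 hζ' hmirror
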